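/- Let A = (α/2)(1 + n·σ) and B = (β/2)(1 + m·σ) be scalar multiples of rank-one projections on ℂ² (n, m unit vectors in ℝ³, 0 < α, β ≤ 1, n ≠ ±m). Then A and B are coexistent if and only if αβ n·m ≤ 2 − 2α − 2β + αβ. -/

import Mathlib

open scoped ComplexOrder RealInnerProductSpace

/-- The vector of Pauli matrices contracted with a real 3-vector: `v · σ`. -/
noncomputable def pauli (v : EuclideanSpace ℝ (Fin 3)) : Matrix (Fin 2) (Fin 2) ℂ :=
  (v 0 : ℂ) • !![0, 1; 1, 0] + (v 1 : ℂ) • !![0, -Complex.I; Complex.I, 0] +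
    (v 2 : ℂ) • !![1, 0; 0, -1]

/-- The qubit effect `(1/2)(α·1 + v·σ)`. -/
noncomputable def qubitEffect (α : ℝ) (v : EuclideanSpace ℝ (Fin 3)) :
    Matrix (Fin 2) (Fin 2) ℂ :=
  (1 / 2 : ℂ) • ((α : ℂ) • (1 : Matrix (Fin 2) (Fin 2) ℂ) + pauli v)

/-- Effects `A` and `B` are coexistent: there is a four-outcome POVM `(G₁,G₂,G₃,G₄)`
with `A = G₁ + G₂` and `B = G₁ + G₃`. -/
def Coexistent (A B : Matrix (Fin 2) (Fin 2) ℂ) : Prop :=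
  ∃ G₁ G₂ G₃ G₄ : Matrix (Fin 2) (Fin 2) ℂ,
    G₁.PosSemidef ∧ G₂.PosSemidef ∧ G₃.PosSemidef ∧ G₄.PosSemidef ∧
    G₁ + G₂ + G₃ + G₄ = 1 ∧ A = G₁ + G₂ ∧ B = G₁ + G₃

/-!
Every Hermitian 2×2 matrix has the Bloch form `(1/2)(t + v·σ)`, and since `(v·σ)² = ‖v‖²` it is
positive semidefinite iff `‖v‖ ≤ t`. Writing `G₁ = (1/2)(γ + g·σ)`, coexistence becomes four norm
inequalities in `(γ, g)`. The first two give `‖g‖ + ‖αn - g‖ ≤ ‖αn‖` and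
`‖g‖ + ‖βm - g‖ ≤ ‖βm‖`, so by strict convexity `g` lies on the rays of both `n` and `m`; as
`n ≠ m` this forces `g = 0` and then `γ = 0`. What remains is `‖αn + βm‖ ≤ 2 - α - β`, whose
square is the stated inequality.
-/

open Matrix

lemma pauli_add (u v : EuclideanSpace ℝ (Fin 3)) : pauli (u + v) = pauli u + pauli v := by
  ext i j; fin_cases i <;> fin_cases j <;> simp [pauli] <;> ring

lemma pauli_neg (v : EuclideanSpace ℝ (Fin 3)) : pauli (-v) = -pauli v := by
  ext i j; fin_cases i <;> fin_cases j <;> simp [pauli] <;> ring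

lemma isHermitian_pauli (v : EuclideanSpace ℝ (Fin 3)) : (pauli v).IsHermitian := by
  ext i j; fin_cases i <;> fin_cases j <;> simp [pauli]

lemma trace_pauli (v : EuclideanSpace ℝ (Fin 3)) : (pauli v).trace = 0 := by
  simp [pauli, trace_fin_two]

lemma pauli_mul_self (v : EuclideanSpace ℝ (Fin 3)) :
    pauli v * pauli v = ‖v‖ ^ 2 • 1 := by
  rw [EuclideanSpace.norm_sq_eq]
  ext i j
  fin_cases i <;> fin_cases j <;> simp [pauli, Fin.sum_univ_three] <;> ring_nf <;>
    simp [Complex.I_sq]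

lemma qubitEffect_add (s t : ℝ) (u v : EuclideanSpace ℝ (Fin 3)) :
    qubitEffect s u + qubitEffect t v = qubitEffect (s + t) (u + v) := by
  simp only [qubitEffect, pauli_add, Complex.ofReal_add, add_smul, smul_add]; abel

lemma qubitEffect_neg (t : ℝ) (v : EuclideanSpace ℝ (Fin 3)) :
    -qubitEffect t v = qubitEffect (-t) (-v) := by
  simp only [qubitEffect, pauli_neg, Complex.ofReal_neg, neg_smul, smul_add, smul_neg]; abel

lemma qubitEffect_sub (s t : ℝ) (u v : EuclideanSpace ℝ (Fin 3)) :
    qubitEffect s u - qubitEffect t v = qubitEffect (s - t) (u - v) := by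
  rw [sub_eq_add_neg, qubitEffect_neg, qubitEffect_add, ← sub_eq_add_neg, ← sub_eq_add_neg]

lemma qubitEffect_two_zero : qubitEffect 2 0 = 1 := by
  have : pauli 0 = 0 := by simp [pauli]
  simp [qubitEffect, this, smul_smul]

lemma trace_qubitEffect (t : ℝ) (v : EuclideanSpace ℝ (Fin 3)) :
    (qubitEffect t v).trace = t := by
  simp [qubitEffect, trace_add, trace_pauli]; ring

lemma det_qubitEffect (t : ℝ) (v : EuclideanSpace ℝ (Fin 3)) :
    (qubitEffect t v).det = ((t ^ 2 - ‖v‖ ^ 2) / 4 : ℝ) := by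
  rw [EuclideanSpace.norm_sq_eq, det_fin_two]
  simp [qubitEffect, pauli, Fin.sum_univ_three, Complex.ext_iff, sq]
  constructor <;> ring

lemma posSemidef_smul_one_add_of_mul_self {ι 𝕜 : Type*} [Fintype ι] [DecidableEq ι] [RCLike 𝕜]
    {H : Matrix ι ι 𝕜} (hH : H.IsHermitian) {r : ℝ} (hr : 0 ≤ r)
    (hHH : H * H = r ^ 2 • 1) : (r • 1 + H).PosSemidef := by
  rcases hr.eq_or_lt with rfl | hr
  · have : H = 0 := by
      rw [← conjTranspose_mul_self_eq_zero, hH.eq, hHH]; simp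
    simp [this, PosSemidef.zero]
  · have hsq : (r • 1 + H)ᴴ * (r • 1 + H) = (2 * r) • (r • 1 + H) := by
      rw [conjTranspose_add, hH.eq, conjTranspose_smul, conjTranspose_one, star_trivial,
        add_mul, mul_add, mul_add, hHH]
      simp only [smul_mul_assoc, mul_smul_comm, one_mul, mul_one, smul_smul]
      module
    have := (posSemidef_conjTranspose_mul_self (r • 1 + H)).smul (a := (2 * r)⁻¹) (by positivity)
    rwa [hsq, smul_smul, inv_mul_cancel₀ (by positivity), one_smul] at this

lemma qubitEffect_posSemidef_iff (t : ℝ) (v : EuclideanSpace ℝ (Fin 3)) :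
    (qubitEffect t v).PosSemidef ↔ ‖v‖ ≤ t := by
  constructor
  · intro h
    have ht : 0 ≤ t := by simpa [trace_qubitEffect] using h.trace_nonneg
    have hdet : 0 ≤ t ^ 2 - ‖v‖ ^ 2 := by
      have := h.det_nonneg
      rw [det_qubitEffect, Complex.zero_le_real] at this
      linarith
    exact (sq_le_sq₀ (norm_nonneg v) ht).mp (by linarith)
  · intro h
    have hsplit : qubitEffect t v = ((t - ‖v‖) / 2 : ℝ) • (1 : Matrix (Fin 2) (Fin 2) ℂ) +
        (1 / 2 : ℝ) • (‖v‖ • 1 + pauli v) := by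
      ext i j; simp [qubitEffect]; ring
    rw [hsplit]
    exact (PosSemidef.one.smul (by linarith)).add
      ((posSemidef_smul_one_add_of_mul_self (isHermitian_pauli v) (norm_nonneg v)
        (pauli_mul_self v)).smul (by norm_num))

lemma Matrix.IsHermitian.exists_eq_qubitEffect {H : Matrix (Fin 2) (Fin 2) ℂ}
    (hH : H.IsHermitian) : ∃ t v, H = qubitEffect t v := by
  refine ⟨(H 0 0 + H 1 1).re, !₂[2 * (H 1 0).re, 2 * (H 1 0).im, (H 0 0 - H 1 1).re], ?_⟩
  have h00 : (H 0 0).im = 0 := by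
    have := congrArg Complex.im (hH.apply 0 0); simp at this; linarith
  have h11 : (H 1 1).im = 0 := by
    have := congrArg Complex.im (hH.apply 1 1); simp at this; linarith
  have h01 : H 0 1 = star (H 1 0) := (hH.apply 0 1).symm
  ext i j; fin_cases i <;> fin_cases j <;>
    simp [qubitEffect, pauli, Complex.ext_iff, h00, h11, h01] <;> ring

theorem coexistent_qubitEffect_iff (α β : ℝ) (a b : EuclideanSpace ℝ (Fin 3)) :
    Coexistent (qubitEffect α a) (qubitEffect β b) ↔
      ∃ γ g, ‖g‖ ≤ γ ∧ ‖a - g‖ ≤ α - γ ∧ ‖b - g‖ ≤ β - γ ∧ ‖a + b - g‖ ≤ 2 + γ - α - β := by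
  simp only [← qubitEffect_posSemidef_iff, norm_sub_rev (a + b)]
  constructor
  · rintro ⟨G₁, G₂, G₃, G₄, h₁, h₂, h₃, h₄, hsum, hA, hB⟩
    obtain ⟨γ, g, rfl⟩ := h₁.isHermitian.exists_eq_qubitEffect
    refine ⟨γ, g, h₁, ?_, ?_, ?_⟩
    · rwa [← qubitEffect_sub, hA, add_sub_cancel_left]
    · rwa [← qubitEffect_sub, hB, add_sub_cancel_left]
    · convert h₄ using 1
      calc qubitEffect (2 + γ - α - β) (g - (a + b))
          = qubitEffect 2 0 - qubitEffect α a - qubitEffect β b + qubitEffect γ g := by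
            rw [qubitEffect_sub, qubitEffect_sub, qubitEffect_add]; congr 1 <;> abel
        _ = G₄ := by rw [qubitEffect_two_zero, ← hsum, hA, hB]; abel
  · rintro ⟨γ, g, h₁, h₂, h₃, h₄⟩
    refine ⟨_, _, _, _, h₁, h₂, h₃, h₄, ?_, ?_, ?_⟩
    · rw [qubitEffect_add, qubitEffect_add, qubitEffect_add, ← qubitEffect_two_zero]
      congr 1 <;> abel
    · rw [qubitEffect_add]; congr 1 <;> abel
    · rw [qubitEffect_add]; congr 1 <;> abel

lemma sameRay_of_norm_add_norm_sub_le {E : Type*} [NormedAddCommGroup E] [NormedSpace ℝ E]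
    [StrictConvexSpace ℝ E] {g x : E} (h : ‖g‖ + ‖x - g‖ ≤ ‖x‖) : SameRay ℝ g x := by
  have hx : SameRay ℝ g (x - g) :=
    sameRay_iff_norm_add.mpr (le_antisymm (norm_add_le _ _) (by rwa [add_sub_cancel]))
  simpa using (SameRay.refl g).add_right hx

lemma norm_smul_add_smul_le_iff {E : Type*} [NormedAddCommGroup E] [InnerProductSpace ℝ E]
    {n m : E} (hn : ‖n‖ = 1) (hm : ‖m‖ = 1) {α β : ℝ} (hα : 0 ≤ α) (hβ : 0 ≤ β)
    (hαβ : α + β ≤ 2) :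
    ‖α • n + β • m‖ ≤ 2 - α - β ↔ α * β * ⟪n, m⟫ ≤ 2 - 2 * α - 2 * β + α * β := by
  rw [← sq_le_sq₀ (norm_nonneg _) (by linarith), norm_add_sq_real, norm_smul, norm_smul,
    real_inner_smul_left, real_inner_smul_right, hn, hm, Real.norm_of_nonneg hα,
    Real.norm_of_nonneg hβ]
  constructor <;> intro h <;> linarith

theorem projection_multiples_coexistence_general (α β : ℝ) (n m : EuclideanSpace ℝ (Fin 3))
    (hn : ‖n‖ = 1) (hm : ‖m‖ = 1) (hnm : n ≠ m)
    (hα0 : 0 < α) (hα1 : α ≤ 1) (hβ0 : 0 < β) (hβ1 : β ≤ 1) :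
    Coexistent (qubitEffect α (α • n)) (qubitEffect β (β • m)) ↔
      α * β * ⟪n, m⟫ ≤ 2 - 2 * α - 2 * β + α * β := by
  have hαn : ‖α • n‖ = α := by rw [norm_smul, hn, mul_one, Real.norm_of_nonneg hα0.le]
  have hβm : ‖β • m‖ = β := by rw [norm_smul, hm, mul_one, Real.norm_of_nonneg hβ0.le]
  rw [coexistent_qubitEffect_iff, ← norm_smul_add_smul_le_iff hn hm hα0.le hβ0.le (by linarith)]
  constructor
  · rintro ⟨γ, g, hg, hαg, hβg, hαβg⟩
    have hgn : SameRay ℝ g (α • n) := sameRay_of_norm_add_norm_sub_le (by linarith)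
    have hgm : SameRay ℝ g (β • m) := sameRay_of_norm_add_norm_sub_le (by linarith)
    obtain rfl : g = 0 := by
      by_contra hg0
      have hαβ : SameRay ℝ (α • n) (β • m) := hgn.symm.trans hgm fun h => absurd h hg0
      have hsame : SameRay ℝ n m := by
        simpa [inv_smul_smul₀ hα0.ne', inv_smul_smul₀ hβ0.ne'] using
          (hαβ.pos_smul_left (inv_pos.2 hα0)).pos_smul_right (inv_pos.2 hβ0)
      exact hnm (hsame.eq_of_norm_eq (hn.trans hm.symm))
    simp only [sub_zero] at hαg hαβg
    linarith
  · intro h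
    exact ⟨0, 0, by simp, by simpa using hαn.le, by simpa using hβm.le, by simpa using h⟩

theorem projection_multiples_coexistence (α β : ℝ) (n m : EuclideanSpace ℝ (Fin 3))
    (hn : ‖n‖ = 1) (hm : ‖m‖ = 1) (hnm : n ≠ m) (hnm' : n ≠ -m)
    (hα0 : 0 < α) (hα1 : α ≤ 1) (hβ0 : 0 < β) (hβ1 : β ≤ 1) :
    Coexistent (qubitEffect α (α • n)) (qubitEffect β (β • m)) ↔
      α * β * ⟪n, m⟫ ≤ 2 - 2 * α - 2 * β + α * β :=
  projection_multiples_coexistence_general α β n m hn hm hnm hα0 hα1 hβ0 hβ1
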